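/- arXiv:2404.05650 — 2 statements merged into one kernel-verified Lean document; each statement's English description precedes it below -/
import Mathlib

section
/- If X ⊆ E is a Beurling set, then cl(E−X) = E−X, i.e. E−X is a closed set of M. -/
open Set Matroid

/-- The rank of a set in a matroid: the maximum cardinality of an independent subset. -/
noncomputable def Matroid.rk' {α : Type*} (M : Matroid α) (X : Set α) : ℕ :=
  sSup {n : ℕ | ∃ I, I ⊆ X ∧ M.Indep I ∧ n = Nat.card I}

/-- The set of indicator vectors of bases of a matroid, viewed as vectors in `ℝ^E`. -/
def Matroid.baseVecs {α : Type*} (M : Matroid α) : Set (α → ℝ) :=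
  {f | ∃ B, M.IsBase B ∧ f = B.indicator 1}

/-- A matroid is loopless if every singleton of the ground set is independent. -/
def Matroid.Loopless' {α : Type*} (M : Matroid α) : Prop := ∀ e ∈ M.E, M.Indep {e}

/-! Every point `η` of the base polytope satisfies `η(Y) ≥ r(E) − r(E − Y)`, because every base `B`
has `|B ∩ Y| ≥ r(E) − r(E − Y)`. If `y ∈ cl(E − X)` lay in `X`, then `X − y` would have the same
right-hand side as `X`, so the Beurling equality for `X` would force `η*(y) ≤ 0`. But `η*` is
positive on every nonloop `y`: write `η* = t • 1_B + (1 − t) • q` with `t > 0`; if `η*(y) = 0` then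
`y ∉ B`, and shifting weight `t / 2` from `B` to an exchanged base `B − f + y` adds
`(t / 2) • (δ_y − δ_f)` with `η*(f) ≥ t`, which strictly decreases the norm. -/

theorem exists_smul_add_smul_eq_of_mem_convexHull {𝕜 E : Type*} [Field 𝕜] [LinearOrder 𝕜]
    [IsStrictOrderedRing 𝕜] [AddCommGroup E] [Module 𝕜 E] {s : Set E} {p : E}
    (hp : p ∈ convexHull 𝕜 s) :
    ∃ a ∈ s, ∃ t : 𝕜, 0 < t ∧ t ≤ 1 ∧ ∃ q ∈ convexHull 𝕜 s, t • a + (1 - t) • q = p := by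
  classical
  suffices h : ∀ T : Finset E, ∀ p ∈ convexHull 𝕜 (T : Set E),
      ∃ a ∈ T, ∃ t : 𝕜, 0 < t ∧ t ≤ 1 ∧ ∃ q ∈ convexHull 𝕜 (T : Set E), t • a + (1 - t) • q = p by
    rw [convexHull_eq_union_convexHull_finite_subsets] at hp
    simp only [mem_iUnion] at hp
    obtain ⟨T, hTs, hpT⟩ := hp
    obtain ⟨a, ha, t, ht0, ht1, q, hq, rfl⟩ := h T p hpT
    exact ⟨a, hTs ha, t, ht0, ht1, q, convexHull_mono hTs hq, rfl⟩
  intro T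
  induction T using Finset.induction_on with
  | empty => simp
  | insert x T _ ih =>
    intro p hp
    rcases T.eq_empty_or_nonempty with rfl | hT
    · obtain rfl : p = x := by simpa using hp
      exact ⟨p, by simp, 1, one_pos, le_rfl, p, subset_convexHull 𝕜 _ (by simp), by simp⟩
    rw [Finset.coe_insert, convexHull_insert (by exact_mod_cast hT)] at hp
    obtain ⟨y, hy, q, hq, hpxq⟩ := mem_convexJoin.1 hp
    rw [mem_singleton_iff.1 hy] at hpxq
    obtain ⟨a, b, ha, hb, hab, rfl⟩ := hpxq
    have hmono : convexHull 𝕜 (T : Set E) ⊆ convexHull 𝕜 (insert x T : Finset E) :=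
      convexHull_mono (by simp)
    rcases ha.eq_or_lt with rfl | ha
    · obtain ⟨a', ha', t, ht0, ht1, q', hq', hq'q⟩ := ih q hq
      refine ⟨a', Finset.mem_insert_of_mem ha', t, ht0, ht1, q', hmono hq', ?_⟩
      obtain rfl : b = 1 := by simpa using hab
      simp [hq'q]
    · exact ⟨x, Finset.mem_insert_self x T, a, ha, by linarith, q, hmono hq, by rw [← hab]; simp⟩

theorem sum_sq_add_smul_single_sub_single_lt {ι : Type*} [Fintype ι] [DecidableEq ι]
    {x : ι → ℝ} {i j : ι} (hij : i ≠ j) {c : ℝ} (hc : 0 < c) (h : x i + c < x j) :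
    ∑ k, (x + c • (Pi.single i 1 - Pi.single j 1) : ι → ℝ) k ^ 2 < ∑ k, x k ^ 2 := by
  have hexpand : ∑ k, (x + c • (Pi.single i 1 - Pi.single j 1) : ι → ℝ) k ^ 2
      = ∑ k, x k ^ 2 + 2 * c * (x i - x j) + 2 * c ^ 2 := by
    simp only [Pi.add_apply, Pi.smul_apply, Pi.sub_apply, smul_eq_mul, add_sq, mul_pow, sub_sq,
      Finset.sum_add_distrib, Finset.sum_sub_distrib, ← Finset.mul_sum, Pi.single_apply]
    simp only [mul_sub, mul_ite, mul_one, mul_zero, Finset.sum_sub_distrib, Finset.sum_ite_eq',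
      Finset.mem_univ, ↓reduceIte, ite_pow, one_pow, ne_eq, OfNat.ofNat_ne_zero,
      not_false_eq_true, zero_pow, hij.symm, sub_zero]
    ring
  rw [hexpand]
  nlinarith

theorem sum_indicator_one_eq_ncard {α : Type*} [Fintype α] (S : Set α) :
    ∑ e, S.indicator (1 : α → ℝ) e = S.ncard := by
  classical
  rw [Finset.sum_indicator_eq_sum_filter]
  simp [Set.ncard_eq_toFinset_card']

theorem indicator_insert_sdiff_singleton_one {α R : Type*} [DecidableEq α] [AddGroupWithOne R]
    {B : Set α} {e f : α} (he : e ∉ B) (hf : f ∈ B) :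
    (insert e B \ {f}).indicator (1 : α → R) = B.indicator 1 + (Pi.single e 1 - Pi.single f 1) := by
  have hef : e ≠ f := ne_of_mem_of_not_mem hf he |>.symm
  ext k
  by_cases hke : k = e
  · subst hke; simp [he, hef]
  by_cases hkf : k = f
  · subst hkf; simp [hf, hef.symm]
  by_cases hk : k ∈ B <;> simp [hk, hke, hkf]

namespace Matroid

variable {α : Type*} {M : Matroid α} {B X : Set α} {e : α} {η : α → ℝ}

theorem IsBase.exists_isBase_insert_sdiff (hB : M.IsBase B) (he : M.Indep {e}) (heB : e ∉ B) :
    ∃ f ∈ B, M.IsBase (insert e B \ {f}) := by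
  obtain ⟨B', hB', heB', hB'B⟩ := he.exists_isBase_subset_union_isBase hB
  have hB'diff : B' \ B = {e} := by
    refine subset_antisymm (fun x hx => ?_) (singleton_subset_iff.2 ⟨heB' rfl, heB⟩)
    exact (hB'B hx.1).resolve_right hx.2
  obtain ⟨f, hf⟩ : ∃ f, B \ B' = {f} := by
    rw [← encard_eq_one, hB.encard_sdiff_comm hB', hB'diff, encard_singleton]
  obtain ⟨g, hg, hB'eq⟩ := hB.eq_exchange_of_sdiff_eq_singleton hB' hf
  obtain rfl : g = e := by rwa [hB'diff] at hg
  exact ⟨f, (hf.symm.subset rfl).1, hB'eq ▸ hB'⟩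

theorem IsBase.eRank_le_encard_inter_add_eRk_sdiff (hB : M.IsBase B) (X : Set α) :
    M.eRank ≤ (B ∩ X).encard + M.eRk (M.E \ X) :=
  calc M.eRank = M.eRk B := hB.eRk_eq_eRank.symm
    _ ≤ M.eRk (B ∩ X) + M.eRk (B \ X) := M.eRk_le_eRk_inter_add_eRk_sdiff B X
    _ ≤ (B ∩ X).encard + M.eRk (M.E \ X) :=
      add_le_add (M.eRk_le_encard _) (M.eRk_mono (sdiff_subset_sdiff_left hB.subset_ground))

theorem cast_rk'_eq_eRk [M.RankFinite] (X : Set α) : (M.rk' X : ℕ∞) = M.eRk X := by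
  obtain ⟨I, hI⟩ := M.exists_isBasis' X
  have hgreatest : IsGreatest {n : ℕ | ∃ J, J ⊆ X ∧ M.Indep J ∧ n = Nat.card J} I.ncard := by
    refine ⟨⟨I, hI.subset, hI.indep, Nat.card_coe_set_eq I⟩, ?_⟩
    rintro _ ⟨J, hJX, hJ, rfl⟩
    rw [Nat.card_coe_set_eq, ← ENat.natCast_le_natCast, hJ.finite.cast_ncard_eq,
      hI.indep.finite.cast_ncard_eq, hI.encard_eq_eRk]
    exact hJ.encard_le_eRk_of_subset hJX
  rw [rk', hgreatest.csSup_eq, hI.indep.finite.cast_ncard_eq, hI.encard_eq_eRk]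

theorem rk'_insert_eq_of_mem_closure [M.RankFinite] (he : e ∈ M.closure X) :
    M.rk' (insert e X) = M.rk' X := by
  rw [← ENat.natCast_inj, cast_rk'_eq_eRk, cast_rk'_eq_eRk, ← eRk_insert_closure_eq,
    insert_eq_of_mem he, eRk_closure_eq]

theorem IsBase.rk'_ground_le_ncard_inter_add_rk'_sdiff [M.RankFinite] (hB : M.IsBase B)
    (X : Set α) : M.rk' M.E ≤ (B ∩ X).ncard + M.rk' (M.E \ X) := by
  rw [← ENat.natCast_le_natCast, Nat.cast_add, cast_rk'_eq_eRk, cast_rk'_eq_eRk, eRk_ground,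
    (hB.finite.subset inter_subset_left).cast_ncard_eq]
  exact hB.eRank_le_encard_inter_add_eRk_sdiff X

theorem nonneg_of_mem_convexHull_baseVecs (hη : η ∈ convexHull ℝ M.baseVecs) : 0 ≤ η :=
  convexHull_min (by rintro _ ⟨B, -, rfl⟩; exact indicator_nonneg (fun _ _ => zero_le_one))
    (convex_Ici 0) hη

variable [Fintype α]

theorem rk'_sub_rk'_le_sum_indicator (hη : η ∈ convexHull ℝ M.baseVecs) (X : Set α) :
    (M.rk' M.E : ℝ) - M.rk' (M.E \ X) ≤ ∑ e, X.indicator η e := by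
  have hlin : IsLinearMap ℝ (fun η : α → ℝ => ∑ e, X.indicator η e) :=
    ⟨fun f g => by simp [indicator_add', Finset.sum_add_distrib],
      fun c f => by
        rw [smul_eq_mul, Finset.mul_sum]
        exact Finset.sum_congr rfl fun e _ => indicator_const_smul_apply X c f e⟩
  refine convexHull_min ?_ (convex_halfSpace_ge hlin _) hη
  rintro _ ⟨B, hB, rfl⟩
  have hrk : M.rk' M.E ≤ (B ∩ X).ncard + M.rk' (M.E \ X) :=
    hB.rk'_ground_le_ncard_inter_add_rk'_sdiff X
  simp only [mem_ofPred_eq, indicator_indicator, sum_indicator_one_eq_ncard, inter_comm X]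
  rw [sub_le_iff_le_add]
  exact_mod_cast hrk

theorem pos_of_forall_sum_sq_le (hη : η ∈ convexHull ℝ M.baseVecs)
    (hmin : ∀ η' ∈ convexHull ℝ M.baseVecs, ∑ e, η e ^ 2 ≤ ∑ e, η' e ^ 2) (he : M.Indep {e}) :
    0 < η e := by
  classical
  by_contra! hηe
  obtain ⟨_, ⟨B, hB, rfl⟩, t, ht0, ht1, q, hq, hηeq⟩ :=
    exists_smul_add_smul_eq_of_mem_convexHull hη
  have hle : ∀ k ∈ B, t ≤ η k := fun k hk => by
    have hqk : 0 ≤ q k := nonneg_of_mem_convexHull_baseVecs hq k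
    rw [← hηeq]
    simp only [Pi.add_apply, Pi.smul_apply, indicator_of_mem hk, Pi.one_apply, smul_eq_mul]
    nlinarith
  have heB : e ∉ B := fun h => (ht0.trans_le (hle e h)).not_ge hηe
  obtain ⟨f, hfB, hB'⟩ := hB.exists_isBase_insert_sdiff he heB
  have hef : e ≠ f := ne_of_mem_of_not_mem hfB heB |>.symm
  set d : α → ℝ := Pi.single e 1 - Pi.single f 1
  have hshift : η + t • d ∈ convexHull ℝ M.baseVecs := by
    have hcombo : η + t • d = t • (insert e B \ {f}).indicator 1 + (1 - t) • q := by
      rw [indicator_insert_sdiff_singleton_one heB hfB, ← hηeq]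
      module
    rw [hcombo]
    have hB'mem : (insert e B \ {f}).indicator 1 ∈ M.baseVecs := ⟨_, hB', rfl⟩
    exact convex_convexHull ℝ _ (subset_convexHull ℝ _ hB'mem) hq ht0.le (by linarith) (by ring)
  have hhalf : η + (t / 2) • d ∈ convexHull ℝ M.baseVecs := by
    have h := (convex_convexHull ℝ M.baseVecs).add_smul_sub_mem hη hshift
      (t := 1 / 2) ⟨by norm_num, by norm_num⟩
    convert h using 2
    module
  exact (hmin _ hhalf).not_gt <|
    sum_sq_add_smul_single_sub_single_lt hef (by positivity) (by linarith [hle f hfB])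

end Matroid

theorem closure_compl_eq_of_beurling_general {α : Type*} [Fintype α]
    (M : Matroid α)
    (hloop : M.Loopless')
    (ηs : α → ℝ) (hmem : ηs ∈ convexHull ℝ M.baseVecs)
    (hmin : ∀ η ∈ convexHull ℝ M.baseVecs, ∑ e, ηs e ^ 2 ≤ ∑ e, η e ^ 2)
    (X : Set α)
    (hBeurling : ∑ e, X.indicator ηs e = (M.rk' M.E : ℝ) - (M.rk' (M.E \ X) : ℝ)) :
    M.closure (M.E \ X) = M.E \ X := by
  classical
  refine (M.subset_closure _ sdiff_subset).antisymm' fun y hy => ?_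
  by_contra hyc
  have hyE : y ∈ M.E := M.mem_ground_of_mem_closure hy
  have hyX : y ∈ X := by_contra fun h => hyc ⟨hyE, h⟩
  have hrk : M.rk' (M.E \ (X \ {y})) = M.rk' (M.E \ X) := by
    rw [sdiff_sdiff_right, inter_singleton_of_mem hyE, union_singleton,
      rk'_insert_eq_of_mem_closure hy]
  have hsplit : ∑ e, X.indicator ηs e = ∑ e, (X \ {y}).indicator ηs e + ηs y := by
    simp [indicator_sdiff (singleton_subset_iff.2 hyX), Finset.sum_sub_distrib,
      indicator_singleton]
  have hlow := M.rk'_sub_rk'_le_sum_indicator hmem (X \ {y})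
  have hpos := M.pos_of_forall_sum_sq_le hmem hmin (hloop y hyE)
  rw [hrk] at hlow
  linarith

/-- If `X ⊆ E` is a Beurling set (i.e. `η*(X) = r(E) − r(E−X)`), then `E − X` is closed:
`cl(E−X) = E−X`. -/
theorem closure_compl_eq_of_beurling {α : Type*} [Fintype α] [Nonempty α]
    (M : Matroid α) (hE : M.E = Set.univ)
    (hloop : M.Loopless') (hrk : 0 < M.rk' M.E)
    (ηs : α → ℝ) (hmem : ηs ∈ convexHull ℝ M.baseVecs)
    (hmin : ∀ η ∈ convexHull ℝ M.baseVecs, ∑ e, ηs e ^ 2 ≤ ∑ e, η e ^ 2)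
    (X : Set α) (hX : X ⊆ M.E)
    (hBeurling : ∑ e, X.indicator ηs e = (M.rk' M.E : ℝ) - (M.rk' (M.E \ X) : ℝ)) :
    M.closure (M.E \ X) = M.E \ X :=
  closure_compl_eq_of_beurling_general M hloop ηs hmem hmin X hBeurling
end

section
/- Let X ⊆ E satisfy cl(E−X) ≠ E. Then S(M) ≤ S(M/(E−X)) and τ(M) ≤ τ(M/(E−X)), where M/(E−X) is the contraction of E−X in M. -/
open Set Matroid

/-- Deletion of `X` from `M`: the restriction of `M` to `M.E \ X`. -/
def Matroid.delete' {α : Type*} (M : Matroid α) (X : Set α) : Matroid α := M ↾ (M.E \ X)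

/-- Contraction of `X` in `M`, defined by duality with deletion. -/
def Matroid.contract' {α : Type*} (M : Matroid α) (X : Set α) : Matroid α := (M✶.delete' X)✶

/-- The strength `S(M) = min{ |X| / (r(E) − r(E−X)) : X ⊆ E, r(E) > r(E−X) }`. -/
noncomputable def Matroid.strength {α : Type*} (M : Matroid α) : ℝ :=
  sInf {s : ℝ | ∃ X, X ⊆ M.E ∧ M.rk' (M.E \ X) < M.rk' M.E ∧
    s = (Nat.card X : ℝ) / ((M.rk' M.E : ℝ) - (M.rk' (M.E \ X) : ℝ))}

/-- The base packing value `τ(M)`. -/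
noncomputable def Matroid.packingValue {α : Type*} [Fintype α] (M : Matroid α) : ℝ :=
  sSup {t : ℝ | ∃ lam : Set α → ℝ, (∀ B, 0 ≤ lam B) ∧ (∀ B, ¬ M.IsBase B → lam B = 0) ∧
    (∀ e ∈ M.E, (∑ B : Set α, B.indicator (fun _ ↦ lam B) e) ≤ 1) ∧
    t = ∑ B : Set α, lam B}

/-!
Write `C = E − X` and `N = M ／ C`, so that `r_N(D) = r(D ∪ C) − r(C)` for `D ⊆ E − C`. Hence
`r_N(X) − r_N(X − Y) = r(E) − r(E − Y)` for `Y ⊆ X`, and every ratio defining `S(N)` also occurs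
in the definition of `S(M)`. Every base of `M` contains a base of `N`; pushing a fractional base
packing of `M` forward along a choice of such sub-bases gives a packing of `N` of the same value.
The hypothesis `cl(E − X) ≠ E` says that `N` has positive rank, which keeps the set defining
`S(N)` nonempty and the set defining `τ(N)` bounded.
-/

namespace Matroid

variable {α : Type*} {M : Matroid α} {B C D I X Y : Set α}

lemma contract'_eq_contract (M : Matroid α) (C : Set α) : M.contract' C = M ／ C := rfl

lemma rankPos_contract_of_closure_ne (h : M.closure C ≠ M.E) : (M ／ C).RankPos :=
  (rankPos_iff _).2 fun hB ↦ h <| by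
    have hC := (contract_spanning_iff'.1 hB.spanning).1
    rw [empty_union] at hC
    rw [← closure_inter_ground, hC.closure_eq]

lemma IsBase.exists_contract_isBase_subset (hB : M.IsBase B) (C : Set α) :
    ∃ B' ⊆ B, (M ／ C).IsBase B' := by
  obtain ⟨J, hJ⟩ := M.exists_isBasis' C
  obtain ⟨B₀, hB₀, hJB₀, hB₀JB⟩ := hJ.indep.exists_isBase_subset_union_isBase hB
  have hB₀C := hB₀.isBasis_ground.isBasis'.contract_isBasis' hJ
    (hB₀.indep.subset (union_subset sdiff_subset hJB₀))
  refine ⟨B₀ \ C, fun e he ↦ ?_, isBasis_ground_iff.1 ((isBasis'_iff_isBasis subset_rfl).1 hB₀C)⟩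
  exact (hB₀JB he.1).resolve_left fun heJ ↦ he.2 (hJ.subset heJ)

section rk'

variable [M.RankFinite]

lemma IsBasis'.rk'_eq_ncard (hI : M.IsBasis' I X) : M.rk' X = I.ncard := by
  refine IsGreatest.csSup_eq ⟨⟨I, hI.subset, hI.indep, (Nat.card_coe_set_eq I).symm⟩, ?_⟩
  rintro n ⟨J, hJX, hJ, rfl⟩
  rw [Nat.card_coe_set_eq, ← Nat.cast_le (α := ℕ∞), hJ.finite.cast_ncard_eq,
    hI.indep.finite.cast_ncard_eq, hI.encard_eq_eRk]
  exact hJ.encard_le_eRk_of_subset hJX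

lemma rk'_empty : M.rk' ∅ = 0 := by
  simpa using M.empty_indep.isBasis_self.isBasis'.rk'_eq_ncard

lemma rk'_ground_pos [M.RankPos] : 0 < M.rk' M.E := by
  obtain ⟨B, hB⟩ := M.exists_isBase
  rw [hB.isBasis_ground.isBasis'.rk'_eq_ncard]
  exact (ncard_pos hB.indep.finite).2 hB.nonempty

lemma rk'_contract_add_rk' (hDC : Disjoint D C) :
    (M ／ C).rk' D + M.rk' C = M.rk' (D ∪ C) := by
  obtain ⟨J, hJ⟩ := M.exists_isBasis' C
  obtain ⟨I, hI, hJI⟩ :=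
    hJ.indep.subset_isBasis'_of_subset (hJ.subset.trans (subset_union_right (s := D)))
  have hIC : (M ／ C).IsBasis' (I \ C) D := by
    simpa [hDC.sdiff_eq_left] using
      hI.contract_isBasis' hJ (hI.indep.subset (union_subset sdiff_subset hJI))
  have hJ_eq : J = I ∩ C :=
    hJ.eq_of_subset_indep (hI.indep.subset inter_subset_left) (subset_inter hJI hJ.subset)
      inter_subset_right
  rw [hIC.rk'_eq_ncard, hJ.rk'_eq_ncard, hI.rk'_eq_ncard, hJ_eq, add_comm,
    ncard_inter_add_ncard_sdiff_eq_ncard I C hI.indep.finite]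

lemma rk'_contract_sdiff_add_rk' (hC : C ⊆ M.E) (hY : Y ⊆ (M ／ C).E) :
    (M ／ C).rk' ((M ／ C).E \ Y) + M.rk' C = M.rk' (M.E \ Y) := by
  rw [contract_ground] at hY ⊢
  rw [rk'_contract_add_rk' (disjoint_sdiff_left.mono_left sdiff_subset)]
  congr 1
  ext e
  have := @hY e
  have := @hC e
  simp only [mem_union, mem_sdiff] at *
  tauto

theorem strength_le_strength_contract (hC : C ⊆ M.E) [(M ／ C).RankPos] :
    M.strength ≤ (M ／ C).strength := by
  have hrk (Y) (hY : Y ⊆ (M ／ C).E) := rk'_contract_sdiff_add_rk' hC hY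
  have hrk_ground : (M ／ C).rk' (M ／ C).E + M.rk' C = M.rk' M.E := by
    simpa using hrk ∅ (empty_subset _)
  refine csInf_le_csInf ⟨0, ?_⟩ ⟨_, (M ／ C).E, subset_rfl, ?_, rfl⟩ ?_
  · rintro s ⟨Y, -, hlt, rfl⟩
    have : (M.rk' (M.E \ Y) : ℝ) < M.rk' M.E := by exact_mod_cast hlt
    exact div_nonneg (Nat.cast_nonneg _) (sub_nonneg.2 this.le)
  · rw [sdiff_self, rk'_empty]
    exact rk'_ground_pos
  · rintro s ⟨Y, hY, hlt, rfl⟩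
    refine ⟨Y, hY.trans (contract_ground_subset_ground M C), by have := hrk Y hY; omega, ?_⟩
    rw [← hrk Y hY, ← hrk_ground]
    push_cast
    ring

end rk'

section packing

variable [Fintype α] {N : Matroid α} {lam : Set α → ℝ}

def IsFractionalBasePacking (M : Matroid α) (lam : Set α → ℝ) : Prop :=
  (∀ B, 0 ≤ lam B) ∧ (∀ B, ¬ M.IsBase B → lam B = 0) ∧
    ∀ e ∈ M.E, ∑ B : Set α, B.indicator (fun _ ↦ lam B) e ≤ 1

lemma packingValue_eq_sSup (M : Matroid α) :
    M.packingValue = sSup {t | ∃ lam, M.IsFractionalBasePacking lam ∧ t = ∑ B, lam B} := by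
  simp only [packingValue, IsFractionalBasePacking, and_assoc]

lemma IsFractionalBasePacking.sum_le_ncard_ground [M.RankPos]
    (h : M.IsFractionalBasePacking lam) : ∑ B, lam B ≤ M.E.ncard := by
  set E := M.E.toFinite.toFinset
  -- the weight of a (nonempty) base is charged to one of its elements
  have hlam_le (B : Set α) : lam B ≤ ∑ e ∈ E, B.indicator (fun _ ↦ lam B) e := by
    by_cases hB : M.IsBase B
    · obtain ⟨e, he⟩ := hB.nonempty
      simpa [he] using Finset.single_le_sum (f := fun e ↦ B.indicator (fun _ ↦ lam B) e)
        (fun e _ ↦ indicator_nonneg (fun _ _ ↦ h.1 B) e)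
        (M.E.toFinite.mem_toFinset.2 (hB.subset_ground he))
    · exact (h.2.1 B hB).le.trans
        (Finset.sum_nonneg fun e _ ↦ indicator_nonneg (fun _ _ ↦ h.1 B) e)
  calc ∑ B, lam B ≤ ∑ B : Set α, ∑ e ∈ E, B.indicator (fun _ ↦ lam B) e :=
        Finset.sum_le_sum fun B _ ↦ hlam_le B
    _ = ∑ e ∈ E, ∑ B : Set α, B.indicator (fun _ ↦ lam B) e := Finset.sum_comm
    _ ≤ ∑ e ∈ E, 1 := Finset.sum_le_sum fun e he ↦ h.2.2 e (M.E.toFinite.mem_toFinset.1 he)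
    _ = M.E.ncard := by simp [E, ncard_eq_toFinset_card M.E]

lemma IsFractionalBasePacking.exists_of_forall_isBase_exists_subset
    (hlam : M.IsFractionalBasePacking lam) (hE : N.E ⊆ M.E)
    (h : ∀ B, M.IsBase B → ∃ B' ⊆ B, N.IsBase B') :
    ∃ lam', N.IsFractionalBasePacking lam' ∧ ∑ B, lam' B = ∑ B, lam B := by
  classical
  have (B : Set α) : ∃ B' ⊆ B, M.IsBase B → N.IsBase B' := by
    by_cases hB : M.IsBase B
    · obtain ⟨B', hB'B, hB'⟩ := h B hB
      exact ⟨B', hB'B, fun _ ↦ hB'⟩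
    · exact ⟨∅, empty_subset B, fun h' ↦ absurd h' hB⟩
  choose f hfB hf using this
  refine ⟨fun J ↦ ∑ B with f B = J, lam B, ⟨fun J ↦ Finset.sum_nonneg fun B _ ↦ hlam.1 B,
    fun J hJ ↦ Finset.sum_eq_zero fun B hB ↦ hlam.2.1 B fun hB' ↦ ?_, fun e he ↦ ?_⟩,
    Finset.sum_fiberwise _ _ _⟩
  · exact hJ ((Finset.mem_filter.1 hB).2 ▸ hf B hB')
  calc ∑ J : Set α, J.indicator (fun _ ↦ ∑ B with f B = J, lam B) e
      = ∑ J : Set α, ∑ B with f B = J, (f B).indicator (fun _ ↦ lam B) e := by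
        refine Finset.sum_congr rfl fun J _ ↦ ?_
        by_cases heJ : e ∈ J
        · simp only [indicator_of_mem heJ]
          refine Finset.sum_congr rfl fun B hB ↦ ?_
          rw [(Finset.mem_filter.1 hB).2, indicator_of_mem heJ]
        · simp only [indicator_of_notMem heJ]
          refine (Finset.sum_eq_zero fun B hB ↦ ?_).symm
          rw [(Finset.mem_filter.1 hB).2, indicator_of_notMem heJ]
    _ = ∑ B : Set α, (f B).indicator (fun _ ↦ lam B) e := Finset.sum_fiberwise _ _ _
    _ ≤ ∑ B : Set α, B.indicator (fun _ ↦ lam B) e := Finset.sum_le_sum fun B _ ↦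
        indicator_le_indicator_of_subset (hfB B) (fun _ ↦ hlam.1 B) e
    _ ≤ 1 := hlam.2.2 e (hE he)

theorem packingValue_le_of_forall_isBase_exists_subset [N.RankPos] (hE : N.E ⊆ M.E)
    (h : ∀ B, M.IsBase B → ∃ B' ⊆ B, N.IsBase B') : M.packingValue ≤ N.packingValue := by
  rw [packingValue_eq_sSup, packingValue_eq_sSup]
  refine csSup_le_csSup ⟨N.E.ncard, ?_⟩ ⟨0, fun _ ↦ 0, ?_, by simp⟩ ?_
  · rintro t ⟨lam, hlam, rfl⟩
    exact hlam.sum_le_ncard_ground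
  · exact ⟨fun _ ↦ le_rfl, fun _ _ ↦ rfl, fun e _ ↦ by simp⟩
  · rintro t ⟨lam, hlam, rfl⟩
    obtain ⟨lam', hlam', hsum⟩ := hlam.exists_of_forall_isBase_exists_subset hE h
    exact ⟨lam', hlam', hsum.symm⟩

theorem packingValue_le_packingValue_contract [(M ／ C).RankPos] :
    M.packingValue ≤ (M ／ C).packingValue :=
  packingValue_le_of_forall_isBase_exists_subset (contract_ground_subset_ground M C)
    fun _ hB ↦ hB.exists_contract_isBase_subset C

end packing

end Matroid

theorem strength_and_packing_le_contract_general {α : Type*} [Fintype α]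
    (M : Matroid α)
    (X : Set α) (hcl : M.closure (M.E \ X) ≠ M.E) :
    M.strength ≤ (M.contract' (M.E \ X)).strength ∧
    M.packingValue ≤ (M.contract' (M.E \ X)).packingValue := by
  have := rankPos_contract_of_closure_ne hcl
  rw [contract'_eq_contract]
  exact ⟨strength_le_strength_contract sdiff_subset, packingValue_le_packingValue_contract⟩

/-- If `cl(E−X) ≠ E`, then `S(M) ≤ S(M/(E−X))` and `τ(M) ≤ τ(M/(E−X))`. -/
theorem strength_and_packing_le_contract {α : Type*} [Fintype α]
    (M : Matroid α) (hne : M.E.Nonempty)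
    (hloop : M.Loopless') (hrk : 0 < M.rk' M.E)
    (X : Set α) (hX : X ⊆ M.E) (hcl : M.closure (M.E \ X) ≠ M.E) :
    M.strength ≤ (M.contract' (M.E \ X)).strength ∧
    M.packingValue ≤ (M.contract' (M.E \ X)).packingValue :=
  strength_and_packing_le_contract_general M X hcl
end
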